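/- The collection of sets of the form q '' {z ∈ F_N | ∀ i, z i ∈ U i}, where U₁, …, U_N are pairwise disjoint open subsets of ℂ, is a basis for the quotient topology on the unordered configuration space X_N. In other words, the topology τ on X_N generated by open sets U = {U₁,…,U_N} consisting of N pairwise non-overlapping open defining sets in the plane coincides with the quotient topology. -/
import Mathlib


/-- The orbit setoid of the permutation action of `S_N` on the ordered configuration
space `F_N = {z : Fin N → ℂ // z injective}`. -/
def configSetoid (N : ℕ) : Setoid {z : Fin N → ℂ // Function.Injective z} where
  r z w := ∃ σ : Equiv.Perm (Fin N), w.1 = z.1 ∘ σ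
  iseqv := by
    constructor
    · intro z
      exact ⟨Equiv.refl _, rfl⟩
    · rintro z w ⟨σ, h⟩
      refine ⟨σ.symm, ?_⟩
      rw [h]; funext i; simp
    · rintro z w u ⟨σ, h⟩ ⟨τ, h'⟩
      exact ⟨τ.trans σ, by rw [h', h]; rfl⟩

open Metric Set

/-- The sets `q '' {z | ∀ i, z i ∈ U i}`, for `U₁, …, U_N` pairwise disjoint open
subsets of `ℂ`, form a basis of the quotient topology on the unordered configuration
space `X_N = F_N / S_N`: the topology generated by `N` pairwise non-overlapping open
defining sets in the plane coincides with the quotient topology. -/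
theorem configuration_basis (N : ℕ) :
    TopologicalSpace.IsTopologicalBasis
      {V : Set (Quotient (configSetoid N)) |
        ∃ U : Fin N → Set ℂ, (∀ i, IsOpen (U i)) ∧
          (∀ i j, i ≠ j → Disjoint (U i) (U j)) ∧
          V = Quotient.mk (configSetoid N) ''
                {z : {z : Fin N → ℂ // Function.Injective z} | ∀ i, z.1 i ∈ U i}} := by
  apply TopologicalSpace.isTopologicalBasis_of_isOpen_of_nhds
  · rintro V ⟨U, hUopen, hUdisj, rfl⟩
    rw [isOpen_coinduced]
    show IsOpen (Quotient.mk (configSetoid N) ⁻¹'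
      (Quotient.mk (configSetoid N) ''
        {z : {z : Fin N → ℂ // Function.Injective z} | ∀ i, z.1 i ∈ U i}))
    have hset : Quotient.mk (configSetoid N) ⁻¹'
        (Quotient.mk (configSetoid N) ''
          {z : {z : Fin N → ℂ // Function.Injective z} | ∀ i, z.1 i ∈ U i})
        = ⋃ σ : Equiv.Perm (Fin N),
            (Subtype.val ⁻¹' (Set.univ.pi fun j => U (σ j)) :
              Set {z : Fin N → ℂ // Function.Injective z}) := by
      ext z
      simp only [mem_preimage, mem_image, mem_setOf_eq, mem_iUnion, mem_pi, mem_univ,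
        true_implies]
      constructor
      · rintro ⟨w, hw, hqw⟩
        obtain ⟨σ, hσ⟩ := Quotient.exact hqw
        exact ⟨σ, fun j => by rw [show z.1 j = w.1 (σ j) from congrFun hσ j]; exact hw _⟩
      · rintro ⟨σ, hσ⟩
        refine ⟨⟨z.1 ∘ σ.symm, z.2.comp σ.symm.injective⟩, fun i => ?_, Quotient.sound ?_⟩
        · show z.1 (σ.symm i) ∈ U i
          have := hσ (σ.symm i)
          simpa using this
        · refine ⟨σ, ?_⟩
          funext j
          simp
    rw [hset]
    exact isOpen_iUnion fun σ =>
      (isOpen_set_pi Set.finite_univ (fun j _ => hUopen (σ j))).preimage continuous_subtype_val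
  · intro a W ha hW
    obtain ⟨z, rfl⟩ := Quotient.exists_rep a
    have hpre : IsOpen (Quotient.mk (configSetoid N) ⁻¹' W) :=
      hW.preimage continuous_quotient_mk'
    obtain ⟨O, hO, hOeq⟩ := isOpen_induced_iff.mp hpre
    have hzO : z.1 ∈ O := by
      have : z ∈ Subtype.val ⁻¹' O := hOeq ▸ ha
      exact this
    obtain ⟨ε, hε, hball⟩ := Metric.isOpen_iff.mp hO z.1 hzO
    obtain ⟨r, hr0, hr⟩ : ∃ r > 0, ∀ i j, i ≠ j → 2 * r ≤ dist (z.1 i) (z.1 j) := by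
      set s := Finset.univ.filter (fun p : Fin N × Fin N => p.1 ≠ p.2) with hs
      rcases s.eq_empty_or_nonempty with he | hne
      · refine ⟨1, one_pos, fun i j hij => absurd ?_ (Finset.notMem_empty (i, j))⟩
        rw [← he, hs]
        simp [hij]
      · refine ⟨s.inf' hne (fun p => dist (z.1 p.1) (z.1 p.2)) / 2, ?_, fun i j hij => ?_⟩
        · rw [gt_iff_lt, lt_div_iff₀ (by norm_num : (0:ℝ) < 2), zero_mul,
            Finset.lt_inf'_iff]
          intro p hp
          have : p.1 ≠ p.2 := by
            simp only [hs, Finset.mem_filter] at hp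
            exact hp.2
          exact dist_pos.mpr (fun h => this (z.2 h))
        · have hmem : (i, j) ∈ s := by simp [hs, hij]
          have := Finset.inf'_le (fun p : Fin N × Fin N => dist (z.1 p.1) (z.1 p.2)) hmem
          linarith
    set δ := min ε r with hδ
    have hδ0 : 0 < δ := lt_min hε hr0
    refine ⟨Quotient.mk (configSetoid N) ''
        {w : {z : Fin N → ℂ // Function.Injective z} | ∀ i, w.1 i ∈ ball (z.1 i) δ},
      ⟨fun i => ball (z.1 i) δ, fun i => isOpen_ball, fun i j hij => ?_, rfl⟩,
      ⟨z, fun i => mem_ball_self hδ0, rfl⟩, ?_⟩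
    · apply Metric.ball_disjoint_ball
      have h1 : δ ≤ r := min_le_right _ _
      have h2 := hr i j hij
      linarith
    · rintro _ ⟨w, hw, rfl⟩
      have hwO : w.1 ∈ ball z.1 ε := by
        rw [mem_ball, dist_pi_lt_iff hε]
        intro i
        exact lt_of_lt_of_le (hw i) (min_le_left _ _)
      have : w ∈ Subtype.val ⁻¹' O := hball hwO
      rw [hOeq] at this
      exact this
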